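/- arXiv:2402.04038 — 2 statements merged into one kernel-verified Lean document; each statement's English description precedes it below -/
import Mathlib

section
/- Let f_w be an l-layer MPGNN on graphs with n nodes, with a diffusion matrix P ∈ ℝ^{n×n}, weights satisfying ‖U_i‖₂ ≤ M₁ for i ∈ [l−1] and ‖W_i‖₂ ≤ M₂ for i ∈ [l], entrywise L-Lipschitz nonlinearities φ_k, ρ_k, ψ_k with φ_k(0)=ρ_k(0)=ψ_k(0)=0, and input X ∈ ℝ^{n×h_0}. Set κ = L M₁ ‖X‖_F and τ = L³ M₂ ‖P‖₂. Then for every 1 ≤ j ≤ l−1, the node representation H_j satisfies ‖H_j‖_F ≤ κ · j if τ = 1, and ‖H_j‖_F ≤ κ · (τ^j − 1)/(τ − 1) if τ ≠ 1. -/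
open MeasureTheory Matrix Finset

noncomputable section

/-- Spectral norm of a real matrix: the operator norm induced by Euclidean vector norms. -/
def specNorm {m n : Type*} [Fintype m] [Fintype n] [DecidableEq n] (A : Matrix m n ℝ) : ℝ :=
  ‖LinearMap.toContinuousLinearMap (Matrix.toEuclideanLin A)‖

/-- Frobenius norm of a real matrix. -/
def frobNorm {m n : Type*} [Fintype m] [Fintype n] (A : Matrix m n ℝ) : ℝ :=
  Real.sqrt (∑ i, ∑ j, (A i j) ^ 2)

/-- Euclidean norm of a finite real vector. -/
def euclNorm {n : Type*} [Fintype n] (v : n → ℝ) : ℝ :=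
  Real.sqrt (∑ i, (v i) ^ 2)

/-- Node representations of an MPGNN:
`H_0 = 0`, `H_{k+1} = φ_{k+1}(X U_{k+1} + ρ_{k+1}(P ψ_{k+1}(H_k) W_{k+1}))`
(we index weights and nonlinearities from `0`, so `W k`, `U k`, `φ k`, `ρ k`, `ψ k`
are the paper's `W_{k+1}`, `U_{k+1}`, `φ_{k+1}`, `ρ_{k+1}`, `ψ_{k+1}`). -/
def mpgnnRep {n : ℕ} (d : ℕ → ℕ) (φ ρ ψ : ℕ → ℝ → ℝ)
    (W : ∀ k : ℕ, Matrix (Fin (d k)) (Fin (d (k + 1))) ℝ)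
    (U : ∀ k : ℕ, Matrix (Fin (d 0)) (Fin (d (k + 1))) ℝ)
    (P : Matrix (Fin n) (Fin n) ℝ) (X : Matrix (Fin n) (Fin (d 0)) ℝ) :
    (k : ℕ) → Matrix (Fin n) (Fin (d k)) ℝ
  | 0 => 0
  | (k + 1) =>
      (X * U k + (P * (mpgnnRep d φ ρ ψ W U P X k).map (ψ k) * W k).map (ρ k)).map (φ k)

/-- Output (readout) of an `l`-layer MPGNN: `f_w(G) = H_l = (1/n) 1_n H_{l-1} W_l`. -/
def mpgnnOut {n : ℕ} (d : ℕ → ℕ) (φ ρ ψ : ℕ → ℝ → ℝ)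
    (W : ∀ k : ℕ, Matrix (Fin (d k)) (Fin (d (k + 1))) ℝ)
    (U : ∀ k : ℕ, Matrix (Fin (d 0)) (Fin (d (k + 1))) ℝ)
    (P : Matrix (Fin n) (Fin n) ℝ) (X : Matrix (Fin n) (Fin (d 0)) ℝ) :
    (l : ℕ) → Fin (d l) → ℝ
  | 0 => fun _ => 0
  | (l + 1) => fun j => (n : ℝ)⁻¹ * ∑ i, (mpgnnRep d φ ρ ψ W U P X l * W l) i j

/-! An entrywise nonlinearity that vanishes at `0` and is `L`-Lipschitz scales Frobenius norms by at
most `L`, and multiplying by a matrix scales them by at most its spectral norm. One layer therefore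
gives `‖H_{k+1}‖_F ≤ κ + τ ‖H_k‖_F`, and unrolling this from `H_0 = 0` gives
`‖H_j‖_F ≤ κ (1 + τ + ⋯ + τ^{j-1})`. -/

section EuclNorm

variable {n : Type*} [Fintype n]

lemma euclNorm_nonneg (x : n → ℝ) : 0 ≤ euclNorm x :=
  Real.sqrt_nonneg _

lemma euclNorm_eq_norm (x : n → ℝ) : euclNorm x = ‖WithLp.toLp 2 x‖ := by
  simp [euclNorm, EuclideanSpace.norm_eq, sq_abs]

lemma euclNorm_add_le (x y : n → ℝ) : euclNorm (x + y) ≤ euclNorm x + euclNorm y := by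
  simpa only [euclNorm_eq_norm, WithLp.toLp_add] using norm_add_le _ _

lemma euclNorm_le_mul_euclNorm {x y : n → ℝ} {c : ℝ} (hc : 0 ≤ c)
    (h : ∀ i, |x i| ≤ c * |y i|) : euclNorm x ≤ c * euclNorm y := by
  have hsq : ∑ i, x i ^ 2 ≤ c ^ 2 * ∑ i, y i ^ 2 := by
    rw [Finset.mul_sum]
    refine Finset.sum_le_sum fun i _ => ?_
    rw [← sq_abs (x i), ← sq_abs (y i), ← mul_pow]
    exact pow_le_pow_left₀ (abs_nonneg _) (h i) 2
  calc euclNorm x ≤ Real.sqrt (c ^ 2 * ∑ i, y i ^ 2) := Real.sqrt_le_sqrt hsq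
    _ = c * euclNorm y := by rw [Real.sqrt_mul (sq_nonneg c), Real.sqrt_sq hc, euclNorm]

end EuclNorm

section SpecNorm

variable {m n : Type*} [Fintype m] [Fintype n]

lemma specNorm_nonneg [DecidableEq n] (A : Matrix m n ℝ) : 0 ≤ specNorm A :=
  norm_nonneg _

lemma euclNorm_mulVec_le [DecidableEq n] (A : Matrix m n ℝ) (x : n → ℝ) :
    euclNorm (A *ᵥ x) ≤ specNorm A * euclNorm x := by
  rw [euclNorm_eq_norm, euclNorm_eq_norm]
  exact (LinearMap.toContinuousLinearMap (Matrix.toEuclideanLin A)).le_opNorm _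

open scoped Matrix.Norms.L2Operator in
lemma specNorm_transpose [DecidableEq m] [DecidableEq n] (A : Matrix m n ℝ) :
    specNorm Aᵀ = specNorm A := by
  have h := l2_opNorm_conjTranspose A
  rw [conjTranspose_eq_transpose_of_trivial] at h
  exact h

end SpecNorm

section FrobNorm

variable {m n p : Type*} [Fintype m] [Fintype n] [Fintype p]

lemma frobNorm_eq_euclNorm_euclNorm (A : Matrix m n ℝ) :
    frobNorm A = euclNorm fun i => euclNorm (A i) := by
  simp only [frobNorm, euclNorm, Real.sq_sqrt (Finset.sum_nonneg fun _ _ => sq_nonneg _)]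

lemma frobNorm_nonneg (A : Matrix m n ℝ) : 0 ≤ frobNorm A :=
  Real.sqrt_nonneg _

lemma frobNorm_transpose (A : Matrix m n ℝ) : frobNorm Aᵀ = frobNorm A := by
  rw [frobNorm, frobNorm, Finset.sum_comm]
  rfl

lemma frobNorm_le_mul_frobNorm_of_rows {A : Matrix m n ℝ} {B : Matrix m p ℝ} {c : ℝ}
    (hc : 0 ≤ c) (h : ∀ i, euclNorm (A i) ≤ c * euclNorm (B i)) : frobNorm A ≤ c * frobNorm B := by
  rw [frobNorm_eq_euclNorm_euclNorm, frobNorm_eq_euclNorm_euclNorm]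
  refine euclNorm_le_mul_euclNorm hc fun i => ?_
  simpa only [abs_of_nonneg (euclNorm_nonneg _)] using h i

lemma frobNorm_add_le (A B : Matrix m n ℝ) : frobNorm (A + B) ≤ frobNorm A + frobNorm B := by
  have hrows : frobNorm (A + B) ≤ 1 * euclNorm fun i => euclNorm (A i) + euclNorm (B i) := by
    rw [frobNorm_eq_euclNorm_euclNorm]
    refine euclNorm_le_mul_euclNorm zero_le_one fun i => ?_
    rw [one_mul, abs_of_nonneg (euclNorm_nonneg _),
      abs_of_nonneg (add_nonneg (euclNorm_nonneg _) (euclNorm_nonneg _))]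
    exact euclNorm_add_le _ _
  rw [one_mul] at hrows
  rw [frobNorm_eq_euclNorm_euclNorm A, frobNorm_eq_euclNorm_euclNorm B]
  exact hrows.trans (euclNorm_add_le _ _)

lemma frobNorm_map_le {f : ℝ → ℝ} {L : ℝ} (hL : 0 ≤ L) (hf : ∀ x, |f x| ≤ L * |x|)
    (A : Matrix m n ℝ) : frobNorm (A.map f) ≤ L * frobNorm A :=
  frobNorm_le_mul_frobNorm_of_rows hL fun i => euclNorm_le_mul_euclNorm hL fun j => hf (A i j)

lemma frobNorm_mul_le_frobNorm_mul_specNorm [DecidableEq n] [DecidableEq p]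
    (A : Matrix m n ℝ) (B : Matrix n p ℝ) : frobNorm (A * B) ≤ frobNorm A * specNorm B := by
  rw [mul_comm]
  refine frobNorm_le_mul_frobNorm_of_rows (specNorm_nonneg B) fun i => ?_
  have hrow : (A * B) i = Bᵀ *ᵥ A i := (mulVec_transpose B (A i)).symm
  rw [hrow, ← specNorm_transpose B]
  exact euclNorm_mulVec_le _ _

lemma frobNorm_mul_le_specNorm_mul_frobNorm [DecidableEq m] [DecidableEq n]
    (A : Matrix m n ℝ) (B : Matrix n p ℝ) : frobNorm (A * B) ≤ specNorm A * frobNorm B := by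
  rw [← frobNorm_transpose, transpose_mul, ← frobNorm_transpose B, ← specNorm_transpose A,
    mul_comm]
  exact frobNorm_mul_le_frobNorm_mul_specNorm _ _

end FrobNorm

lemma abs_le_mul_abs_of_abs_sub_le {f : ℝ → ℝ} {L : ℝ} (hf : ∀ x y, |f x - f y| ≤ L * |x - y|)
    (h₀ : f 0 = 0) (x : ℝ) : |f x| ≤ L * |x| := by
  simpa [h₀] using hf x 0

lemma frobNorm_mpgnnLayer_le {m m' a b c : Type*} [Fintype m] [Fintype m'] [Fintype a]
    [Fintype b] [Fintype c] [DecidableEq m] [DecidableEq m'] [DecidableEq a] [DecidableEq b]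
    [DecidableEq c]
    {f g h : ℝ → ℝ} {L M₁ M₂ : ℝ} (hL : 0 ≤ L) (hf : ∀ x, |f x| ≤ L * |x|)
    (hg : ∀ x, |g x| ≤ L * |x|) (hh : ∀ x, |h x| ≤ L * |x|)
    (X : Matrix m a ℝ) (U : Matrix a b ℝ) (P : Matrix m m' ℝ) (H : Matrix m' c ℝ)
    (W : Matrix c b ℝ) (hU : specNorm U ≤ M₁) (hW : specNorm W ≤ M₂) :
    frobNorm ((X * U + (P * H.map h * W).map g).map f) ≤
      L * M₁ * frobNorm X + L ^ 3 * M₂ * specNorm P * frobNorm H := by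
  have hM₂ : 0 ≤ M₂ := (specNorm_nonneg W).trans hW
  have hXU : frobNorm (X * U) ≤ frobNorm X * M₁ :=
    (frobNorm_mul_le_frobNorm_mul_specNorm X U).trans
      (mul_le_mul_of_nonneg_left hU (frobNorm_nonneg X))
  have hPHW : frobNorm (P * H.map h * W) ≤ specNorm P * (L * frobNorm H) * M₂ := calc
    _ ≤ frobNorm (P * H.map h) * M₂ := (frobNorm_mul_le_frobNorm_mul_specNorm _ _).trans
        (mul_le_mul_of_nonneg_left hW (frobNorm_nonneg _))
    _ ≤ specNorm P * (L * frobNorm H) * M₂ := mul_le_mul_of_nonneg_right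
        ((frobNorm_mul_le_specNorm_mul_frobNorm _ _).trans
          (mul_le_mul_of_nonneg_left (frobNorm_map_le hL hh H) (specNorm_nonneg P))) hM₂
  calc _ ≤ L * (frobNorm (X * U) + frobNorm ((P * H.map h * W).map g)) :=
        (frobNorm_map_le hL hf _).trans (mul_le_mul_of_nonneg_left (frobNorm_add_le _ _) hL)
    _ ≤ L * (frobNorm X * M₁ + L * (specNorm P * (L * frobNorm H) * M₂)) := by
        gcongr
        exact (frobNorm_map_le hL hg _).trans (mul_le_mul_of_nonneg_left hPHW hL)
    _ = L * M₁ * frobNorm X + L ^ 3 * M₂ * specNorm P * frobNorm H := by ring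

lemma le_mul_geom_sum_of_le_add_mul {a : ℕ → ℝ} {κ τ : ℝ} {N : ℕ} (hτ : 0 ≤ τ)
    (h₀ : a 0 ≤ 0) (hstep : ∀ k, k < N → a (k + 1) ≤ κ + τ * a k) {k : ℕ} (hk : k ≤ N) :
    a k ≤ κ * ∑ i ∈ range k, τ ^ i := by
  induction k with
  | zero => simpa using h₀
  | succ k ih =>
    calc a (k + 1) ≤ κ + τ * a k := hstep k hk
      _ ≤ κ + τ * (κ * ∑ i ∈ range k, τ ^ i) := by gcongr; exact ih (by omega)
      _ = κ * ∑ i ∈ range (k + 1), τ ^ i := by rw [geom_sum_succ]; ring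

/-- Bound on the Frobenius norm of the node representations of an `l`-layer MPGNN:
with `κ = L M₁ ‖X‖_F` and `τ = L³ M₂ ‖P‖₂`, for `1 ≤ j ≤ l-1` we have
`‖H_j‖_F ≤ κ j` if `τ = 1` and `‖H_j‖_F ≤ κ (τ^j - 1)/(τ - 1)` if `τ ≠ 1`. -/
theorem mpgnnRep_frobNorm_le (n l : ℕ) (d : ℕ → ℕ) (φ ρ ψ : ℕ → ℝ → ℝ)
    (W : ∀ k : ℕ, Matrix (Fin (d k)) (Fin (d (k + 1))) ℝ)
    (U : ∀ k : ℕ, Matrix (Fin (d 0)) (Fin (d (k + 1))) ℝ)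
    (L M₁ M₂ : ℝ)
    (hLipφ : ∀ k, k < l - 1 → ∀ x y : ℝ, |φ k x - φ k y| ≤ L * |x - y|)
    (hLipρ : ∀ k, k < l - 1 → ∀ x y : ℝ, |ρ k x - ρ k y| ≤ L * |x - y|)
    (hLipψ : ∀ k, k < l - 1 → ∀ x y : ℝ, |ψ k x - ψ k y| ≤ L * |x - y|)
    (hφ0 : ∀ k, k < l - 1 → φ k 0 = 0) (hρ0 : ∀ k, k < l - 1 → ρ k 0 = 0)
    (hψ0 : ∀ k, k < l - 1 → ψ k 0 = 0)
    (hU : ∀ k, k < l - 1 → specNorm (U k) ≤ M₁)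
    (hW : ∀ k, k < l → specNorm (W k) ≤ M₂)
    (P : Matrix (Fin n) (Fin n) ℝ) (X : Matrix (Fin n) (Fin (d 0)) ℝ)
    (j : ℕ) (hj1 : 1 ≤ j) (hjl : j ≤ l - 1) :
    (L ^ 3 * M₂ * specNorm P = 1 →
      frobNorm (mpgnnRep d φ ρ ψ W U P X j) ≤ L * M₁ * frobNorm X * j) ∧
    (L ^ 3 * M₂ * specNorm P ≠ 1 →
      frobNorm (mpgnnRep d φ ρ ψ W U P X j) ≤
        L * M₁ * frobNorm X *
          (((L ^ 3 * M₂ * specNorm P) ^ j - 1) / (L ^ 3 * M₂ * specNorm P - 1))) := by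
  have hl : 0 < l - 1 := hj1.trans hjl
  have hL : 0 ≤ L := (abs_nonneg _).trans (by simpa using hLipφ 0 hl 1 0)
  have hM₂ : 0 ≤ M₂ := (specNorm_nonneg _).trans (hW 0 (by omega))
  have hτ : 0 ≤ L ^ 3 * M₂ * specNorm P := by
    have := specNorm_nonneg P
    positivity
  have hstep : ∀ k, k < l - 1 → frobNorm (mpgnnRep d φ ρ ψ W U P X (k + 1)) ≤
      L * M₁ * frobNorm X +
        L ^ 3 * M₂ * specNorm P * frobNorm (mpgnnRep d φ ρ ψ W U P X k) :=
    fun k hk => frobNorm_mpgnnLayer_le hL (abs_le_mul_abs_of_abs_sub_le (hLipφ k hk) (hφ0 k hk))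
      (abs_le_mul_abs_of_abs_sub_le (hLipρ k hk) (hρ0 k hk))
      (abs_le_mul_abs_of_abs_sub_le (hLipψ k hk) (hψ0 k hk)) X (U k) P _ (W k) (hU k hk)
      (hW k (by omega))
  have hbound := le_mul_geom_sum_of_le_add_mul
    (a := fun k => frobNorm (mpgnnRep d φ ρ ψ W U P X k)) hτ (by simp [mpgnnRep, frobNorm])
    hstep hjl
  refine ⟨fun h => ?_, fun h => ?_⟩
  · simpa [h] using hbound
  · rwa [geom_sum_eq h] at hbound

end
end

section
/- Let P and Q be probability measures on a measurable space and let S be a measurable set with Z := Q(S) ≥ 1/2. Define the conditioned measure Q̃ by Q̃(A) = Q(A ∩ S)/Z for all measurable A. Then KL(Q̃‖P) ≤ 2 · KL(Q‖P) + 2 · log 2. -/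
/-!
Write `Z = Q(S)` and `L = log (dQ/dP)`. The conditioned measure has density `Z⁻¹ 1_S dQ/dP`, so
its divergence is `Z⁻¹ ∫_S L dQ - log Z`. By the log-sum inequality
`∫_{Sᶜ} L dQ ≥ (1 - Z) log (1 - Z)`, hence `∫_S L dQ ≤ KL(Q‖P) - (1 - Z) log (1 - Z)` and
`KL(Q̃‖P) ≤ Z⁻¹ (KL(Q‖P) + h(Z))`, where `h` is the binary entropy.
Conclude with `Z⁻¹ ≤ 2` and `h(Z) ≤ log 2`.
-/

open MeasureTheory

noncomputable section

/-- Real-valued Kullback–Leibler divergence `∫ log (dQ/dP) dQ`. -/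
def klDivReal {W : Type*} [MeasurableSpace W] (Q P : Measure W) : ℝ :=
  ∫ w, Real.log ((Q.rnDeriv P w).toReal) ∂Q

open ProbabilityTheory InformationTheory Real Set

section LogLikelihoodRatio

variable {Ω : Type*} [MeasurableSpace Ω] {μ ν : Measure Ω} {s : Set Ω}

lemma llr_restrict_ae_eq [μ.HaveLebesgueDecomposition ν] [SigmaFinite ν] (hμν : μ ≪ ν)
    (hs : MeasurableSet s) : llr (μ.restrict s) ν =ᵐ[μ.restrict s] llr μ ν := by
  filter_upwards [ae_restrict_of_ae (hμν.ae_le (Measure.rnDeriv_restrict μ ν hs)),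
    ae_restrict_mem hs] with x hx hxs
  simp only [llr_def, hx, indicator_of_mem hxs]

lemma mul_log_le_integral_llr [IsFiniteMeasure μ] [IsFiniteMeasure ν] (hμν : μ ≪ ν)
    (h_int : Integrable (llr μ ν) μ) :
    μ.real univ * log (μ.real univ / ν.real univ) ≤ ∫ x, llr μ ν x ∂μ := by
  have h := mul_log_le_toReal_klDiv hμν h_int
  rw [toReal_klDiv hμν h_int] at h
  linarith

lemma mul_log_le_setIntegral_llr [IsFiniteMeasure μ] [IsProbabilityMeasure ν] (hμν : μ ≪ ν)
    (h_int : Integrable (llr μ ν) μ) (hs : MeasurableSet s) :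
    μ.real s * log (μ.real s) ≤ ∫ x in s, llr μ ν x ∂μ := by
  have h_ae := llr_restrict_ae_eq hμν hs
  have h := mul_log_le_integral_llr (Measure.absolutelyContinuous_restrict.trans hμν)
    (h_int.restrict.congr h_ae.symm)
  simpa [integral_congr_ae h_ae, measureReal_restrict_apply_univ] using h

lemma integral_llr_cond [IsFiniteMeasure μ] [SigmaFinite ν] (hμν : μ ≪ ν)
    (h_int : Integrable (llr μ ν) μ) (hs : MeasurableSet s) (hμs : μ s ≠ 0) :
    ∫ x, llr μ[|s] ν x ∂μ[|s] = (μ.real s)⁻¹ * ∫ x in s, llr μ ν x ∂μ - log (μ.real s) := by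
  have h_ae : llr μ[|s] ν =ᵐ[μ.restrict s] fun x ↦ llr μ ν x + log (μ s)⁻¹.toReal := by
    filter_upwards [llr_smul_left (Measure.absolutelyContinuous_restrict.trans hμν) (μ s)⁻¹
      (by simp) (by simpa using hμs), llr_restrict_ae_eq hμν hs] with x hx hx'
    rw [ProbabilityTheory.cond, hx, hx']
  have hZ : μ.real s ≠ 0 := (measureReal_ne_zero_iff).mpr hμs
  rw [ProbabilityTheory.cond, integral_smul_measure, ← ProbabilityTheory.cond,
    integral_congr_ae h_ae, integral_add h_int.restrict (integrable_const _), setIntegral_const,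
    smul_eq_mul, ENNReal.toReal_inv, ← measureReal_def, log_inv]
  field_simp
  ring

lemma integral_llr_cond_le [IsProbabilityMeasure μ] [IsProbabilityMeasure ν] (hμν : μ ≪ ν)
    (h_int : Integrable (llr μ ν) μ) (hs : MeasurableSet s) (hμs : μ s ≠ 0) :
    ∫ x, llr μ[|s] ν x ∂μ[|s] ≤ (μ.real s)⁻¹ * (∫ x, llr μ ν x ∂μ + binEntropy (μ.real s)) := by
  have h_compl := mul_log_le_setIntegral_llr hμν h_int hs.compl
  rw [probReal_compl_eq_one_sub hs] at h_compl
  have h_split := integral_add_compl hs h_int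
  have hZ : 0 < μ.real s := ENNReal.toReal_pos hμs (measure_ne_top μ s)
  calc ∫ x, llr μ[|s] ν x ∂μ[|s]
      = (μ.real s)⁻¹ * ∫ x in s, llr μ ν x ∂μ - log (μ.real s) :=
        integral_llr_cond hμν h_int hs hμs
    _ ≤ (μ.real s)⁻¹ * (∫ x, llr μ ν x ∂μ - (1 - μ.real s) * log (1 - μ.real s))
          - log (μ.real s) := by gcongr; linarith
    _ = _ := by rw [binEntropy, log_inv, log_inv]; field_simp; ring

end LogLikelihoodRatio

/-- If `Z = Q(S) ≥ 1/2` and `Q̃` is `Q` conditioned on `S`, i.e.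
`Q̃(A) = Q(A ∩ S)/Z`, then `KL(Q̃‖P) ≤ 2 KL(Q‖P) + 2 log 2`. -/
theorem klDiv_cond_le (Ω : Type*) [MeasurableSpace Ω] (P Q : Measure Ω)
    [IsProbabilityMeasure P] [IsProbabilityMeasure Q]
    (hQP : Q ≪ P) (hint : Integrable (fun w => Real.log ((Q.rnDeriv P w).toReal)) Q)
    (S : Set Ω) (hS : MeasurableSet S) (hZ : (1 : ℝ) / 2 ≤ (Q S).toReal) :
    klDivReal ((Q S)⁻¹ • Q.restrict S) P ≤ 2 * klDivReal Q P + 2 * Real.log 2 := by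
  change (1 : ℝ) / 2 ≤ Q.real S at hZ
  have hZ_pos : 0 < Q.real S := by linarith
  have hZ_inv : (Q.real S)⁻¹ ≤ 2 := by
    rw [inv_le_comm₀ hZ_pos two_pos]
    linarith
  have hKL : 0 ≤ klDivReal Q P := by
    have h := mul_log_le_integral_llr hQP hint
    simp only [probReal_univ, div_one, log_one, mul_zero] at h
    exact h
  -- `klDivReal Q P` is `∫ llr Q P ∂Q`, and `(Q S)⁻¹ • Q.restrict S` is `Q[|S]`, definitionally.
  calc klDivReal ((Q S)⁻¹ • Q.restrict S) P
      ≤ (Q.real S)⁻¹ * (klDivReal Q P + binEntropy (Q.real S)) :=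
        integral_llr_cond_le hQP hint hS ((measureReal_ne_zero_iff).mp hZ_pos.ne')
    _ ≤ 2 * (klDivReal Q P + log 2) := by
        have := binEntropy_nonneg hZ_pos.le measureReal_le_one
        gcongr
        exact binEntropy_le_log_two
    _ = 2 * klDivReal Q P + 2 * Real.log 2 := by ring

end
end
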